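/- arXiv:1410.6930 — 2 statements merged into one kernel-verified Lean document; each statement's English description precedes it below -/
import Mathlib

section
/- Let S be a standard Borel space, p a probability measure on S, and μ a shift-invariant probability measure on S^{Z^d} with finite specific entropy, ℐ(μ) < ∞. Then for every finite subset Λ ⊂ Z^d the relative entropy I(μ_Λ; p^{⊗Λ}) is finite; in particular μ_Λ is absolutely continuous with respect to p^{⊗Λ}. -/
open MeasureTheory Filter
open scoped ENNReal

/-- The lattice `ℤ^d`. -/
abbrev Zd (d : ℕ) := Fin d → ℤ

/-- The shift by vector `-i` on the configuration space `S^{ℤ^d}`: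
`(θ_i ω)_j = ω_{j+i}`. -/
def shift (S : Type*) {d : ℕ} (i : Zd d) (ω : Zd d → S) : Zd d → S :=
  fun j => ω (j + i)

/-- A measure on `S^{ℤ^d}` is shift-invariant if it is invariant under all shifts. -/
def ShiftInvariant {S : Type*} [MeasurableSpace S] {d : ℕ}
    (μ : Measure (Zd d → S)) : Prop :=
  ∀ i : Zd d, μ.map (shift S i) = μ

/-- The cube `Λ_n = {-n, …, n-1}^d` as a finite subset of `ℤ^d`. -/
noncomputable def cube (d n : ℕ) : Finset (Zd d) :=
  Finset.Icc (fun _ => -(n : ℤ)) (fun _ => (n : ℤ) - 1)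

/-- The marginal of `μ` on the coordinates in `Λ`. -/
noncomputable def marginal {S : Type*} [MeasurableSpace S] {d : ℕ}
    (μ : Measure (Zd d → S)) (Λ : Finset (Zd d)) : Measure (Λ → S) :=
  μ.map (fun ω (j : Λ) => ω j)

open Classical in
/-- The relative entropy `I(μ;ν) = ∫ log(dμ/dν) dμ` if `μ ≪ ν` (and the integral
makes sense), `+∞` otherwise. -/
noncomputable def relEnt {α : Type*} [MeasurableSpace α] (μ ν : Measure α) : ℝ≥0∞ :=
  if μ ≪ ν ∧ Integrable (llr μ ν) μ then ENNReal.ofReal (∫ x, llr μ ν x ∂μ) else ⊤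

/-- The specific entropy of `μ` relative to the reference product measure `p^{⊗ℤ^d}`:
`ℐ(μ) = limsup_n (1/(2n)^d) I(μ_{Λ_n}; p^{⊗Λ_n})`. -/
noncomputable def specEnt {S : Type*} [MeasurableSpace S] {d : ℕ}
    (p : Measure S) (μ : Measure (Zd d → S)) : ℝ≥0∞ :=
  Filter.limsup
    (fun n : ℕ =>
      relEnt (marginal μ (cube d n)) (Measure.pi fun _ : cube d n => p)
        / ((2 * n : ℝ≥0∞) ^ d))
    Filter.atTop

/-!
Relative entropy cannot increase under a measurable map (data processing inequality), and the
marginal on `Λ` and the product measure on `Λ` are the images of those on a larger volume `Λ'`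
under the restriction `S^{Λ'} → S^{Λ}`. So `Λ ↦ I(μ_Λ; p^{⊗Λ})` is monotone. Finite specific
entropy makes `I(μ_{Λ_n}; p^{⊗Λ_n})` finite for all large `n`, and `Λ ⊆ Λ_n` for large `n`.
-/

open InformationTheory

lemma relEnt_eq_klDiv {α : Type*} [MeasurableSpace α] (μ ν : Measure α)
    [IsProbabilityMeasure μ] [IsProbabilityMeasure ν] : relEnt μ ν = klDiv μ ν := by
  by_cases h : μ ≪ ν ∧ Integrable (llr μ ν) μ
  · rw [relEnt, if_pos h, klDiv_of_ac_of_integrable h.1 h.2]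
    simp
  · rw [relEnt, if_neg h, eq_comm, ← not_ne_iff, klDiv_ne_top_iff]
    exact h

section FiniteVolume

variable {S : Type*} [MeasurableSpace S] {d : ℕ}

lemma marginal_eq_map_restrict₂ (μ : Measure (Zd d → S)) {Λ Λ' : Finset (Zd d)} (h : Λ ⊆ Λ') :
    marginal μ Λ = (marginal μ Λ').map (Finset.restrict₂ (π := fun _ => S) h) := by
  rw [marginal, marginal, Measure.map_map (Finset.measurable_restrict₂ h)
    (measurable_pi_lambda _ fun j => measurable_pi_apply _)]
  rfl

instance isProbabilityMeasure_marginal (μ : Measure (Zd d → S)) [IsProbabilityMeasure μ]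
    (Λ : Finset (Zd d)) : IsProbabilityMeasure (marginal μ Λ) :=
  Measure.isProbabilityMeasure_map
    (measurable_pi_lambda _ fun _ => measurable_pi_apply _).aemeasurable

lemma relEnt_marginal_le_of_subset (p : Measure S) [IsProbabilityMeasure p]
    (μ : Measure (Zd d → S)) [IsProbabilityMeasure μ] {Λ Λ' : Finset (Zd d)} (h : Λ ⊆ Λ') :
    relEnt (marginal μ Λ) (Measure.pi fun _ : Λ => p) ≤
      relEnt (marginal μ Λ') (Measure.pi fun _ : Λ' => p) := by
  have hpi : (Measure.pi fun _ : Λ => p) =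
      (Measure.pi fun _ : Λ' => p).map (Finset.restrict₂ (π := fun _ => S) h) :=
    isProjectiveMeasureFamily_pi (fun _ : Zd d => p) Λ' Λ h
  rw [relEnt_eq_klDiv, relEnt_eq_klDiv, marginal_eq_map_restrict₂ μ h, hpi]
  exact klDiv_map_le _ _ (Finset.measurable_restrict₂ h)

lemma eventually_subset_cube (Λ : Finset (Zd d)) : ∀ᶠ n in atTop, Λ ⊆ cube d n := by
  have hmem (j : Zd d) : ∀ᶠ n : ℕ in atTop, j ∈ cube d n := by
    simp only [cube, Finset.mem_Icc, Pi.le_def, ← forall_and, eventually_all]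
    intro k
    filter_upwards [eventually_gt_atTop (j k).natAbs] with n hn
    omega
  simpa only [Finset.subset_iff, eventually_all_finset] using fun j _ => hmem j

end FiniteVolume

lemma eventually_lt_top_of_limsup_div_lt_top {f c : ℕ → ℝ≥0∞} (hc : ∀ n, c n ≠ ⊤)
    (h : limsup (fun n => f n / c n) atTop < ⊤) : ∀ᶠ n in atTop, f n < ⊤ := by
  filter_upwards [eventually_lt_of_limsup_lt h] with n hn
  by_contra hf
  rw [not_lt, top_le_iff] at hf
  simp [hf, ENNReal.top_div_of_ne_top (hc n)] at hn

theorem relEnt_marginal_lt_top_of_specEnt_lt_top_general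
    {d : ℕ} {S : Type*} [MeasurableSpace S]
    (p : Measure S) [IsProbabilityMeasure p]
    (μ : Measure (Zd d → S)) [IsProbabilityMeasure μ]
    (hent : specEnt p μ < ⊤) :
    ∀ Λ : Finset (Zd d),
      relEnt (marginal μ Λ) (Measure.pi fun _ : Λ => p) < ⊤ ∧
      marginal μ Λ ≪ Measure.pi (fun _ : Λ => p) := by
  intro Λ
  have hcube : ∀ᶠ n in atTop,
      relEnt (marginal μ (cube d n)) (Measure.pi fun _ : cube d n => p) < ⊤ :=
    eventually_lt_top_of_limsup_div_lt_top (fun n => by finiteness) hent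
  obtain ⟨n, hn_fin, hΛn⟩ := (hcube.and (eventually_subset_cube Λ)).exists
  have hfin := (relEnt_marginal_le_of_subset p μ hΛn).trans_lt hn_fin
  refine ⟨hfin, ?_⟩
  rw [relEnt_eq_klDiv, lt_top_iff_ne_top, klDiv_ne_top_iff] at hfin
  exact hfin.1

/-- If a shift-invariant probability measure `μ` on `S^{ℤ^d}` has finite
specific entropy, then every finite-volume marginal has finite relative entropy with
respect to the product reference measure; in particular it is absolutely continuous. -/
theorem relEnt_marginal_lt_top_of_specEnt_lt_top
    {d : ℕ} (hd : 1 ≤ d) {S : Type*} [MeasurableSpace S] [StandardBorelSpace S]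
    (p : Measure S) [IsProbabilityMeasure p]
    (μ : Measure (Zd d → S)) [IsProbabilityMeasure μ] (hinv : ShiftInvariant μ)
    (hent : specEnt p μ < ⊤) :
    ∀ Λ : Finset (Zd d),
      relEnt (marginal μ Λ) (Measure.pi fun _ : Λ => p) < ⊤ ∧
      marginal μ Λ ≪ Measure.pi (fun _ : Λ => p) :=
  relEnt_marginal_lt_top_of_specEnt_lt_top_general p μ hent
end

section
/- Let S be a measurable space, n ≥ 1, and Q a probability measure on S^{Λ_n}. Then the averaged periodization bar Q := (2n)^{−d} Σ_{i∈Λ_n} Q^per ∘ θ_i^{−1} is shift-invariant: bar Q ∘ θ_j^{−1} = bar Q for every j ∈ Z^d. -/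
open MeasureTheory Filter
open scoped ENNReal

/-- The decomposition of a configuration `ω ∈ S^{ℤ^d}` into its `2n`-blocks: the block
indexed by `k ∈ ℤ^d` is `(ω_{j + 2nk})_{j ∈ Λ_n}`. -/
def blockMap (S : Type*) (d n : ℕ) (ω : Zd d → S) : Zd d → (cube d n → S) :=
  fun k j => ω (fun l => (j : Zd d) l + (2 * (n : ℤ)) * k l)

/-- `Qper` is the periodization of a probability measure `Q` on `S^{Λ_n}`: the probability
measure on `S^{ℤ^d}` under which the disjoint blocks `((ω_{j+2nk})_{j∈Λ_n})_{k∈ℤ^d}` are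
i.i.d. with law `Q`; it is characterized by the fact that every finite family of blocks is
distributed according to the corresponding finite product of copies of `Q`. -/
def IsPeriodization {S : Type*} [MeasurableSpace S] {d n : ℕ}
    (Q : Measure (cube d n → S)) (Qper : Measure (Zd d → S)) : Prop :=
  IsProbabilityMeasure Qper ∧
    ∀ K : Finset (Zd d),
      Qper.map (fun ω (k : K) => blockMap S d n ω k)
        = Measure.pi (fun _ : K => Q)

/-!
The periodization is the unique probability measure with the prescribed i.i.d. block marginals,
and a shift by `2n k` only relabels the blocks, so `Q^per` is invariant under the sublattice
`2nℤ^d`. Hence `i ↦ Q^per ∘ θ_i⁻¹` is `2n`-periodic, and translating a sum of a `2n`-periodic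
function over the fundamental domain `Λ_n` by `j` merely permutes its terms.
-/

section BlockDecomposition

variable {d n : ℕ}

-- The shift by `n` puts the residues in `Λ_n = {-n, …, n-1}` rather than in `{0, …, 2n-1}`.
def blockIndex (n : ℕ) {d : ℕ} (m : Zd d) : Zd d := fun l => (m l + n) / (2 * n)

def blockOffset (n : ℕ) {d : ℕ} (m : Zd d) : Zd d := fun l => (m l + n) % (2 * n) - n

theorem blockOffset_add_smul_blockIndex (m : Zd d) :
    blockOffset n m + (2 * n : ℤ) • blockIndex n m = m := by
  funext l
  have := Int.emod_add_mul_ediv (m l + n) (2 * n)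
  simp only [Pi.add_apply, Pi.smul_apply, smul_eq_mul, blockOffset, blockIndex]
  omega

theorem blockOffset_mem_cube (hn : 0 < n) (m : Zd d) : blockOffset n m ∈ cube d n := by
  have h2n : (0 : ℤ) < 2 * n := by positivity
  simp only [cube, Finset.mem_Icc, Pi.le_def, blockOffset]
  refine ⟨fun l => ?_, fun l => ?_⟩
  · have := Int.emod_nonneg (m l + n) h2n.ne'
    omega
  · have := Int.emod_lt_of_pos (m l + n) h2n
    omega

theorem blockOffset_of_mem_cube {m : Zd d} (hm : m ∈ cube d n) : blockOffset n m = m := by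
  simp only [cube, Finset.mem_Icc, Pi.le_def] at hm
  funext l
  have h1 := hm.1 l
  have h2 := hm.2 l
  simp only [blockOffset, Int.emod_eq_of_lt (by omega : 0 ≤ m l + n) (by omega : m l + n < 2 * n)]
  omega

theorem blockOffset_blockOffset_add (a b : Zd d) :
    blockOffset n (blockOffset n a + b) = blockOffset n (a + b) := by
  funext l
  simp only [blockOffset, Pi.add_apply]
  rw [sub_add_eq_add_sub, sub_add_cancel, Int.emod_add_emod, add_right_comm]

theorem sum_cube_add_of_periodic {M : Type*} [AddCommMonoid M] (hn : 0 < n) {f : Zd d → M}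
    (hf : ∀ m k : Zd d, f (m + (2 * n : ℤ) • k) = f m) (j : Zd d) :
    ∑ i ∈ cube d n, f (i + j) = ∑ i ∈ cube d n, f i := by
  have hred (m : Zd d) : f m = f (blockOffset n m) := by
    conv_lhs => rw [← blockOffset_add_smul_blockIndex (n := n) m]
    exact hf _ _
  have hinv {a : Zd d} (ha : a ∈ cube d n) (b : Zd d) :
      blockOffset n (blockOffset n (a + b) - b) = a := by
    rw [sub_eq_add_neg, blockOffset_blockOffset_add, add_neg_cancel_right,
      blockOffset_of_mem_cube ha]
  refine Finset.sum_nbij' (fun i => blockOffset n (i + j)) (fun i => blockOffset n (i - j))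
    (fun _ _ => blockOffset_mem_cube hn _) (fun _ _ => blockOffset_mem_cube hn _)
    (fun i hi => hinv hi j) (fun i hi => ?_) (fun i _ => hred _)
  simpa [sub_eq_add_neg] using hinv hi (-j)

theorem blockMap_shift_smul {S : Type*} (ω : Zd d → S) (k₀ k : Zd d) :
    blockMap S d n (shift S ((2 * n : ℤ) • k₀) ω) k = blockMap S d n ω (k + k₀) := by
  funext j
  simp only [blockMap, shift]
  congr 1
  funext l
  simp only [Pi.add_apply, Pi.smul_apply, smul_eq_mul]
  ring

end BlockDecomposition

section Periodization

variable {S : Type*} [MeasurableSpace S] {d n : ℕ}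

theorem measurable_shift (i : Zd d) : Measurable (shift S i) :=
  measurable_pi_lambda _ fun j => measurable_pi_apply (j + i)

theorem measurable_blocks (K : Finset (Zd d)) :
    Measurable (fun ω (k : K) => blockMap S d n ω k) :=
  measurable_pi_lambda _ fun _ => measurable_pi_lambda _ fun _ => measurable_pi_apply _

theorem map_shift_map_shift (μ : Measure (Zd d → S)) (i j : Zd d) :
    (μ.map (shift S i)).map (shift S j) = μ.map (shift S (i + j)) := by
  rw [Measure.map_map (measurable_shift j) (measurable_shift i)]
  congr 1
  funext ω m
  simp only [Function.comp_apply, shift, add_assoc, add_comm j]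

theorem MeasureTheory.Measure.pi_map_comp_equiv {ι ι' X : Type*} [Fintype ι] [Fintype ι']
    [MeasurableSpace X] (Q : Measure X) [SigmaFinite Q] (e : ι ≃ ι') :
    (Measure.pi fun _ : ι' => Q).map (fun b => b ∘ e) = Measure.pi fun _ : ι => Q :=
  (measurePreserving_arrowCongr' (fun _ => Q) (fun _ => Q) e.symm (MeasurableEquiv.refl X)
    fun _ => MeasurePreserving.id Q).map_eq

/-- Every site lies in some block, so each finite-dimensional marginal is an image of a block
marginal. -/
theorem ext_of_map_blocks (hn : 0 < n) {μ ν : Measure (Zd d → S)}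
    [IsProbabilityMeasure μ] [IsProbabilityMeasure ν]
    (h : ∀ K : Finset (Zd d), μ.map (fun ω (k : K) => blockMap S d n ω k)
      = ν.map (fun ω (k : K) => blockMap S d n ω k)) : μ = ν := by
  classical
  refine IsProjectiveLimit.unique (P := fun I => ν.map I.restrict) (fun I => ?_) fun _ => rfl
  let K := I.image (blockIndex n)
  let g : (K → cube d n → S) → (I → S) := fun b m =>
    b ⟨blockIndex n m, Finset.mem_image_of_mem _ m.2⟩ ⟨blockOffset n m, blockOffset_mem_cube hn _⟩
  have hg : Measurable g :=
    measurable_pi_lambda _ fun _ => (measurable_pi_apply _).comp (measurable_pi_apply _)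
  have hrestrict : I.restrict = g ∘ fun ω (k : K) => blockMap S d n ω k := by
    funext ω m
    simp only [Finset.restrict, Function.comp_apply, g, blockMap]
    congr 1
    exact (blockOffset_add_smul_blockIndex (n := n) (m : Zd d)).symm
  simp only [hrestrict, ← Measure.map_map hg (measurable_blocks K), h K]

theorem IsPeriodization.unique (hn : 0 < n) {Q : Measure (cube d n → S)}
    {μ ν : Measure (Zd d → S)} (hμ : IsPeriodization Q μ) (hν : IsPeriodization Q ν) : μ = ν :=
  have := hμ.1
  have := hν.1
  ext_of_map_blocks hn fun K => (hμ.2 K).trans (hν.2 K).symm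

theorem IsPeriodization.map_shift_smul {Q : Measure (cube d n → S)} [SigmaFinite Q]
    {Qper : Measure (Zd d → S)} (hper : IsPeriodization Q Qper) (k₀ : Zd d) :
    IsPeriodization Q (Qper.map (shift S ((2 * n : ℤ) • k₀))) := by
  have := hper.1
  refine ⟨Measure.isProbabilityMeasure_map (measurable_shift _).aemeasurable, fun K => ?_⟩
  let e : K ≃ K.map (Equiv.addRight k₀).toEmbedding :=
    (Equiv.addRight k₀).subtypeEquiv fun k => by simp
  have hblocks : (fun ω (k : K) => blockMap S d n ω k) ∘ shift S ((2 * n : ℤ) • k₀)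
      = (· ∘ e) ∘ fun ω k => blockMap S d n ω k := by
    funext ω k
    exact blockMap_shift_smul ω k₀ k
  rw [Measure.map_map (measurable_blocks K) (measurable_shift _), hblocks,
    ← Measure.map_map (measurable_pi_lambda (· ∘ e) fun k => measurable_pi_apply (e k))
      (measurable_blocks _), hper.2, Measure.pi_map_comp_equiv]

end Periodization

theorem averaged_periodization_shiftInvariant_general
    {d : ℕ} {S : Type*} [MeasurableSpace S]
    (n : ℕ) (hn : 1 ≤ n)
    (Q : Measure (cube d n → S)) [IsProbabilityMeasure Q]
    (Qper : Measure (Zd d → S)) (hper : IsPeriodization Q Qper) :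
    ShiftInvariant
      (((2 * n : ℝ≥0∞) ^ d)⁻¹ • ∑ i ∈ cube d n, Qper.map (shift S i)) := by
  have hperiodic (m k : Zd d) :
      Qper.map (shift S (m + (2 * n : ℤ) • k)) = Qper.map (shift S m) := by
    rw [add_comm, ← map_shift_map_shift, (hper.map_shift_smul k).unique hn hper]
  intro j
  rw [Measure.map_smul, Measure.map_finset_sum (measurable_shift j).aemeasurable]
  simp only [map_shift_map_shift]
  rw [sum_cube_add_of_periodic (f := fun i => Qper.map (shift S i)) hn hperiodic j]

/-- The averaged periodization
`bar Q = (2n)^{-d} Σ_{i ∈ Λ_n} Q^per ∘ θ_i^{-1}` of a probability measure `Q` on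
`S^{Λ_n}` is shift-invariant. -/
theorem averaged_periodization_shiftInvariant
    {d : ℕ} (hd : 1 ≤ d) {S : Type*} [MeasurableSpace S]
    (n : ℕ) (hn : 1 ≤ n)
    (Q : Measure (cube d n → S)) [IsProbabilityMeasure Q]
    (Qper : Measure (Zd d → S)) (hper : IsPeriodization Q Qper) :
    ShiftInvariant
      (((2 * n : ℝ≥0∞) ^ d)⁻¹ • ∑ i ∈ cube d n, Qper.map (shift S i)) :=
  averaged_periodization_shiftInvariant_general n hn Q Qper hper
end
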